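/- arXiv:2501.11032 — 2 statements merged into one kernel-verified Lean document; each statement's English description precedes it below -/
import Mathlib

section
/- Let (X, ω) be a symplectic vector space over 𝕂 ∈ {ℝ, ℂ} and let λ, μ be Lagrangian subspaces with (λ, μ) a Fredholm pair of index 0. Let V be a linear subspace of λ and W a linear subspace of μ, and assume V and W are ω-closed. Then V + W is ω-closed. -/
def omegaAnn {𝕂 : Type*} [Field 𝕂] {X : Type*} [AddCommGroup X] [Module 𝕂 X]
    (ω : X →ₗ[𝕂] X →ₗ[𝕂] 𝕂) (V : Submodule 𝕂 X) : Submodule 𝕂 X where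
  carrier := {x | ∀ y ∈ V, ω x y = 0}
  zero_mem' := by intro y hy; simp
  add_mem' := by
    intro a b ha hb y hy
    simp only [map_add, LinearMap.add_apply, ha y hy, hb y hy, add_zero]
  smul_mem' := by
    intro c a ha y hy
    simp only [map_smul, LinearMap.smul_apply, ha y hy, smul_zero]

section aux
variable {𝕂 : Type*} [Field 𝕂] {X : Type*} [AddCommGroup X] [Module 𝕂 X]
    (ω : X →ₗ[𝕂] X →ₗ[𝕂] 𝕂)

lemma mem_omegaAnn {V : Submodule 𝕂 X} {x : X} :
    x ∈ omegaAnn ω V ↔ ∀ y ∈ V, ω x y = 0 := Iff.rfl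

lemma omegaAnn_antitone {V W : Submodule 𝕂 X} (h : V ≤ W) :
    omegaAnn ω W ≤ omegaAnn ω V := fun x hx y hy => hx y (h hy)

lemma le_omegaAnn_omegaAnn (hskew : ∀ x y, ω x y = - ω y x) (V : Submodule 𝕂 X) :
    V ≤ omegaAnn ω (omegaAnn ω V) := by
  intro v hv y hy
  rw [hskew, hy v hv, neg_zero]

lemma omegaAnn_sup (V W : Submodule 𝕂 X) :
    omegaAnn ω (V ⊔ W) = omegaAnn ω V ⊓ omegaAnn ω W := by
  apply le_antisymm
  · exact le_inf (omegaAnn_antitone ω le_sup_left) (omegaAnn_antitone ω le_sup_right)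
  · rintro x ⟨h1, h2⟩ y hy
    have : V ⊔ W ≤ LinearMap.ker (ω x) := sup_le (fun z hz => h1 z hz) (fun z hz => h2 z hz)
    exact this hy

lemma mem_omegaAnn_span_singleton {f x : X} :
    x ∈ omegaAnn ω (Submodule.span 𝕂 {f}) ↔ ω x f = 0 := by
  constructor
  · intro h; exact h f (Submodule.mem_span_singleton_self f)
  · intro h y hy
    have : Submodule.span 𝕂 {f} ≤ LinearMap.ker (ω x) := by
      rw [Submodule.span_singleton_le_iff_mem]; exact h
    exact this hy

lemma closed_sup_span_singleton (hskew : ∀ x y, ω x y = - ω y x)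
    {V : Submodule 𝕂 X} (hV : omegaAnn ω (omegaAnn ω V) = V) (f : X) :
    omegaAnn ω (omegaAnn ω (V ⊔ Submodule.span 𝕂 {f})) = V ⊔ Submodule.span 𝕂 {f} := by
  apply le_antisymm
  · intro x hx
    rw [omegaAnn_sup] at hx
    by_cases hc : ∀ y ∈ omegaAnn ω V, ω x y = 0
    · exact Submodule.mem_sup_left (hV ▸ hc)
    · push_neg at hc
      obtain ⟨y0, hy0V, hxy0⟩ := hc
      have hy0f : ω y0 f ≠ 0 := by
        intro h0
        exact hxy0 (hx y0 ⟨hy0V, (mem_omegaAnn_span_singleton ω).mpr h0⟩)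
      set c := ω x y0 / ω y0 f with hc
      have key : x + c • f ∈ omegaAnn ω (omegaAnn ω V) := by
        intro y hy
        set t := ω y f / ω y0 f with ht
        have h1 : y - t • y0 ∈ omegaAnn ω V ⊓ omegaAnn ω (Submodule.span 𝕂 {f}) := by
          refine ⟨sub_mem hy (Submodule.smul_mem _ _ hy0V), (mem_omegaAnn_span_singleton ω).mpr ?_⟩
          simp only [map_sub, map_smul, LinearMap.sub_apply, LinearMap.smul_apply,
            smul_eq_mul, ht]
          field_simp
          simp
        have h2 : ω x (y - t • y0) = 0 := hx _ h1
        have h3 : ω x y = t * ω x y0 := by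
          simpa [sub_eq_zero, map_sub, map_smul, smul_eq_mul] using h2
        have h4 : ω f y = - ω y f := hskew f y
        simp only [map_add, map_smul, LinearMap.add_apply, LinearMap.smul_apply, smul_eq_mul,
          h3, h4, hc, ht]
        field_simp
        ring
      rw [hV] at key
      have : x = (x + c • f) + (-c) • f := by module
      rw [this]
      exact Submodule.add_mem _ (Submodule.mem_sup_left key)
        (Submodule.mem_sup_right (Submodule.smul_mem _ _ (Submodule.mem_span_singleton_self f)))
  · exact le_omegaAnn_omegaAnn ω hskew _

lemma closed_sup_finset (hskew : ∀ x y, ω x y = - ω y x)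
    {V : Submodule 𝕂 X} (hV : omegaAnn ω (omegaAnn ω V) = V) (s : Finset X) :
    omegaAnn ω (omegaAnn ω (V ⊔ Submodule.span 𝕂 (s : Set X))) =
      V ⊔ Submodule.span 𝕂 (s : Set X) := by
  classical
  induction s using Finset.induction_on with
  | empty => simpa using hV
  | @insert a s _ ih =>
    have hre : V ⊔ Submodule.span 𝕂 (↑(insert a s) : Set X)
        = (V ⊔ Submodule.span 𝕂 (s : Set X)) ⊔ Submodule.span 𝕂 {a} := by
      rw [Finset.coe_insert, Submodule.span_insert, sup_comm (Submodule.span 𝕂 {a}) _,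
        ← sup_assoc]
    rw [hre]
    exact closed_sup_span_singleton ω hskew ih a

lemma closed_sup_findim (hskew : ∀ x y, ω x y = - ω y x)
    {V F : Submodule 𝕂 X} (hV : omegaAnn ω (omegaAnn ω V) = V)
    (hF : FiniteDimensional 𝕂 F) :
    omegaAnn ω (omegaAnn ω (V ⊔ F)) = V ⊔ F := by
  obtain ⟨s, hs⟩ := (Submodule.fg_iff_finiteDimensional F).mpr hF
  rw [← hs]
  exact closed_sup_finset ω hskew hV s

end aux
section pairing
variable {𝕂 : Type*} [Field 𝕂] {X : Type*} [AddCommGroup X] [Module 𝕂 X]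
    (ω : X →ₗ[𝕂] X →ₗ[𝕂] 𝕂) (l m : Submodule 𝕂 X)

lemma ker_of_mem_inf (hl : omegaAnn ω l = l) (hm : omegaAnn ω m = m)
    {d : X} (hd : d ∈ l ⊓ m) : l ⊔ m ≤ LinearMap.ker (ω d) := by
  apply sup_le
  · intro y hy
    have hdl : d ∈ omegaAnn ω l := by rw [hl]; exact hd.1
    exact LinearMap.mem_ker.mpr (hdl y hy)
  · intro y hy
    have hdm : d ∈ omegaAnn ω m := by rw [hm]; exact hd.2
    exact LinearMap.mem_ker.mpr (hdm y hy)

lemma omega_rep (hnondeg : ∀ x, (∀ y, ω x y = 0) → x = 0)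
    (hl : omegaAnn ω l = l) (hm : omegaAnn ω m = m)
    (hfin₁ : FiniteDimensional 𝕂 ↥(l ⊓ m))
    (hfin₂ : FiniteDimensional 𝕂 (X ⧸ (l ⊔ m)))
    (hindex : Module.finrank 𝕂 ↥(l ⊓ m) = Module.finrank 𝕂 (X ⧸ (l ⊔ m)))
    (ψ : Module.Dual 𝕂 (X ⧸ (l ⊔ m))) :
    ∃ d ∈ l ⊓ m, ∀ x : X, ω d x = ψ (Submodule.Quotient.mk x) := by
  let Φ : ↥(l ⊓ m) →ₗ[𝕂] Module.Dual 𝕂 (X ⧸ (l ⊔ m)) :=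
    { toFun := fun d => (l ⊔ m).liftQ (ω d.1) (ker_of_mem_inf ω l m hl hm d.2)
      map_add' := by
        intro d e
        apply LinearMap.ext
        intro q
        obtain ⟨x, rfl⟩ := Submodule.Quotient.mk_surjective _ q
        simp [Submodule.liftQ_apply, map_add]
      map_smul' := by
        intro c d
        apply LinearMap.ext
        intro q
        obtain ⟨x, rfl⟩ := Submodule.Quotient.mk_surjective _ q
        simp [Submodule.liftQ_apply, map_smul] }
  have hinj : Function.Injective Φ := by
    rw [← LinearMap.ker_eq_bot, LinearMap.ker_eq_bot']
    intro d hd0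
    have : ∀ y : X, ω d.1 y = 0 := by
      intro y
      have := LinearMap.congr_fun hd0 (Submodule.Quotient.mk y)
      simpa [Φ, Submodule.liftQ_apply] using this
    exact Subtype.ext (hnondeg _ this)
  have hrank : Module.finrank 𝕂 ↥(l ⊓ m)
      = Module.finrank 𝕂 (Module.Dual 𝕂 (X ⧸ (l ⊔ m))) := by
    rw [hindex, Subspace.dual_finrank_eq]
  have hsurj : Function.Surjective Φ :=
    (LinearMap.injective_iff_surjective_of_finrank_eq_finrank hrank).mp hinj
  obtain ⟨d, hd⟩ := hsurj ψ
  refine ⟨d.1, d.2, fun x => ?_⟩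
  have := LinearMap.congr_fun hd (Submodule.Quotient.mk x)
  simpa [Φ, Submodule.liftQ_apply] using this

lemma omegaAnn_inf_le_sup (hskew : ∀ x y, ω x y = - ω y x)
    (hnondeg : ∀ x, (∀ y, ω x y = 0) → x = 0)
    (hl : omegaAnn ω l = l) (hm : omegaAnn ω m = m)
    (hfin₁ : FiniteDimensional 𝕂 ↥(l ⊓ m))
    (hfin₂ : FiniteDimensional 𝕂 (X ⧸ (l ⊔ m)))
    (hindex : Module.finrank 𝕂 ↥(l ⊓ m) = Module.finrank 𝕂 (X ⧸ (l ⊔ m))) :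
    omegaAnn ω (l ⊓ m) ≤ l ⊔ m := by
  intro x hx
  rw [← Submodule.Quotient.mk_eq_zero]
  rw [← Module.forall_dual_apply_eq_zero_iff 𝕂]
  intro ψ
  obtain ⟨d, hd, hrep⟩ := omega_rep ω l m hnondeg hl hm hfin₁ hfin₂ hindex ψ
  rw [← hrep x]
  rw [hskew]
  rw [hx d hd, neg_zero]

end pairing

section gap
variable {𝕂 : Type*} [Field 𝕂] {X : Type*} [AddCommGroup X] [Module 𝕂 X]
    (ω : X →ₗ[𝕂] X →ₗ[𝕂] 𝕂) (l m : Submodule 𝕂 X)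

lemma gap_lemma
    (hskew : ∀ x y, ω x y = - ω y x)
    (hnondeg : ∀ x, (∀ y, ω x y = 0) → x = 0)
    (hl : omegaAnn ω l = l) (hm : omegaAnn ω m = m)
    (hfin₁ : FiniteDimensional 𝕂 ↥(l ⊓ m))
    (hfin₂ : FiniteDimensional 𝕂 (X ⧸ (l ⊔ m)))
    (hindex : Module.finrank 𝕂 ↥(l ⊓ m) = Module.finrank 𝕂 (X ⧸ (l ⊔ m)))
    (V W : Submodule 𝕂 X) (hVl : V ≤ l) (hWm : W ≤ m)
    (hV : omegaAnn ω (omegaAnn ω V) = V)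
    (hW : omegaAnn ω (omegaAnn ω W) = W)
    (d : X) (hdF : d ∈ l ⊓ m)
    (hdA : ∀ y ∈ omegaAnn ω V ⊓ omegaAnn ω W, ω d y = 0) :
    d ∈ V ⊔ W := by
  have hlV : l ≤ omegaAnn ω V := by rw [← hl]; exact omegaAnn_antitone ω hVl
  have hmW : m ≤ omegaAnn ω W := by rw [← hm]; exact omegaAnn_antitone ω hWm
  set π := (l ⊔ m).mkQ with hπ
  set TV := Submodule.map π (omegaAnn ω V) with hTV
  set TW := Submodule.map π (omegaAnn ω W) with hTW
  set φ : Module.Dual 𝕂 (X ⧸ (l ⊔ m)) :=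
    (l ⊔ m).liftQ (ω d) (ker_of_mem_inf ω l m hl hm hdF) with hφdef
  have hφ : φ ∈ Submodule.dualAnnihilator (TV ⊓ TW) := by
    rw [Submodule.mem_dualAnnihilator]
    rintro q ⟨⟨p, hp, hpq⟩, ⟨r, hr, hrq⟩⟩
    have hpr0 : π (p - r) = 0 := by rw [map_sub, hpq, hrq, sub_self]
    have hpr : p - r ∈ l ⊔ m := by
      rwa [← LinearMap.mem_ker, hπ, Submodule.ker_mkQ] at hpr0
    obtain ⟨c, hc, n, hn, hcn⟩ := Submodule.mem_sup.mp hpr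
    have hz1 : p - c ∈ omegaAnn ω V := by
      intro v hv
      simp only [map_sub, LinearMap.sub_apply, hp v hv, hlV hc v hv, sub_zero]
    have hz2 : p - c ∈ omegaAnn ω W := by
      have hpc : p - c = r + n := by
        have h0 : p - r - (c + n) = 0 := by rw [hcn]; abel
        have h1 : (p - c) - (r + n) = 0 := by rw [← h0]; abel
        exact sub_eq_zero.mp h1
      rw [hpc]
      intro w hw
      simp only [map_add, LinearMap.add_apply, hr w hw, hmW hn w hw, add_zero]
    have hq : q = π p := hpq.symm
    have hc0 : ω d c = 0 := ker_of_mem_inf ω l m hl hm hdF (Submodule.mem_sup_left hc)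
    have : φ q = ω d p := by
      rw [hq, hπ, hφdef]
      simp [Submodule.liftQ_apply]
    rw [this]
    have : ω d p = ω d (p - c) + ω d c := by simp [map_sub]
    rw [this, hc0, add_zero]
    exact hdA _ ⟨hz1, hz2⟩
  rw [Subspace.dualAnnihilator_inf_eq] at hφ
  obtain ⟨φ₁, hφ₁, φ₂, hφ₂, hsum⟩ := Submodule.mem_sup.mp hφ
  obtain ⟨d₁, hd₁F, hrep₁⟩ := omega_rep ω l m hnondeg hl hm hfin₁ hfin₂ hindex φ₁
  obtain ⟨d₂, hd₂F, hrep₂⟩ := omega_rep ω l m hnondeg hl hm hfin₁ hfin₂ hindex φ₂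
  have hdsum : d = d₁ + d₂ := by
    have h0 : ∀ y : X, ω (d - d₁ - d₂) y = 0 := by
      intro y
      have hdy : ω d y = φ (Submodule.Quotient.mk y) := by
        rw [hφdef]; simp [Submodule.liftQ_apply]
      have : φ (Submodule.Quotient.mk y)
          = φ₁ (Submodule.Quotient.mk y) + φ₂ (Submodule.Quotient.mk y) := by
        rw [← hsum]; simp
      simp only [map_sub, LinearMap.sub_apply, hdy, hrep₁ y, hrep₂ y, this]
      ring
    have := hnondeg _ h0
    have h1 : d - d₁ - d₂ = 0 := this
    have h2 : d - (d₁ + d₂) = 0 := by rw [← h1]; abel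
    exact sub_eq_zero.mp h2
  have hd₁V : d₁ ∈ V := by
    rw [← hV]
    intro y hy
    rw [hrep₁ y]
    exact (Submodule.mem_dualAnnihilator φ₁).mp hφ₁ _ ⟨y, hy, rfl⟩
  have hd₂W : d₂ ∈ W := by
    rw [← hW]
    intro y hy
    rw [hrep₂ y]
    exact (Submodule.mem_dualAnnihilator φ₂).mp hφ₂ _ ⟨y, hy, rfl⟩
  rw [hdsum]
  exact add_mem (Submodule.mem_sup_left hd₁V) (Submodule.mem_sup_right hd₂W)

end gap

/-- Let `(X, ω)` be a symplectic vector space over `𝕂 ∈ {ℝ, ℂ}` and `(l, m)` a Fredholm pair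
of Lagrangian subspaces of index `0`. If `V ⊆ l` and `W ⊆ m` are `ω`-closed subspaces, then
`V + W` is `ω`-closed. -/
theorem closed_sum_lagrangian
    {𝕂 : Type*} [RCLike 𝕂] {X : Type*} [AddCommGroup X] [Module 𝕂 X]
    (ω : X →ₗ[𝕂] X →ₗ[𝕂] 𝕂)
    (hskew : ∀ x y, ω x y = - ω y x)
    (hnondeg : ∀ x, (∀ y, ω x y = 0) → x = 0)
    (l m : Submodule 𝕂 X)
    (hl : omegaAnn ω l = l) (hm : omegaAnn ω m = m)
    (hfin₁ : FiniteDimensional 𝕂 ↥(l ⊓ m))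
    (hfin₂ : FiniteDimensional 𝕂 (X ⧸ (l ⊔ m)))
    (hindex : Module.finrank 𝕂 ↥(l ⊓ m) = Module.finrank 𝕂 (X ⧸ (l ⊔ m)))
    (V W : Submodule 𝕂 X) (hVl : V ≤ l) (hWm : W ≤ m)
    (hV : omegaAnn ω (omegaAnn ω V) = V)
    (hW : omegaAnn ω (omegaAnn ω W) = W) :
    omegaAnn ω (omegaAnn ω (V ⊔ W)) = V ⊔ W := by
  have hlV : l ≤ omegaAnn ω V := by rw [← hl]; exact omegaAnn_antitone ω hVl
  have hmW : m ≤ omegaAnn ω W := by rw [← hm]; exact omegaAnn_antitone ω hWm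
  have hll : ∀ a ∈ l, ∀ c ∈ l, ω a c = 0 := by
    intro a ha c hc; rw [← hl] at ha; exact ha c hc
  have hmm' : ∀ a ∈ m, ∀ c ∈ m, ω a c = 0 := by
    intro a ha c hc; rw [← hm] at ha; exact ha c hc
  rw [omegaAnn_sup]
  apply le_antisymm
  · intro x hx
    -- x annihilates A := Ann V ⊓ Ann W
    have hFA : l ⊓ m ≤ omegaAnn ω V ⊓ omegaAnn ω W :=
      le_inf (le_trans inf_le_left hlV) (le_trans inf_le_right hmW)
    have hxlm : x ∈ l ⊔ m := by
      apply omegaAnn_inf_le_sup ω l m hskew hnondeg hl hm hfin₁ hfin₂ hindex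
      intro e he
      exact hx e (hFA he)
    obtain ⟨a, ha, b, hb, hab⟩ := Submodule.mem_sup.mp hxlm
    -- a ∈ Ann (Ann (V ⊔ (l ⊓ m)))
    have hA1 : a ∈ omegaAnn ω (omegaAnn ω (V ⊔ (l ⊓ m))) := by
      intro y hy
      rw [omegaAnn_sup] at hy
      obtain ⟨hyV, hyF⟩ := hy
      have hylm : y ∈ l ⊔ m :=
        omegaAnn_inf_le_sup ω l m hskew hnondeg hl hm hfin₁ hfin₂ hindex hyF
      obtain ⟨c, hc, n, hn, hcn⟩ := Submodule.mem_sup.mp hylm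
      have hnV : n ∈ omegaAnn ω V := by
        intro v hv
        have hn' : ω n v = ω y v - ω c v := by
          rw [← hcn]; simp [map_add]
        rw [hn', hyV v hv, hlV hc v hv, sub_zero]
      have hnA : n ∈ omegaAnn ω V ⊓ omegaAnn ω W := ⟨hnV, hmW hn⟩
      have han : ω a n = 0 := by
        have hxn : ω x n = ω a n + ω b n := by rw [← hab]; simp [map_add]
        have h1 : ω x n = 0 := hx n hnA
        have h2 : ω b n = 0 := hmm' b hb n hn
        rw [h1, h2, add_zero] at hxn
        exact hxn.symm
      have : ω a y = ω a c + ω a n := by rw [← hcn]; simp [map_add]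
      rw [this, hll a ha c hc, han, add_zero]
    rw [closed_sup_findim ω hskew hV hfin₁] at hA1
    obtain ⟨v, hv, d₁, hd₁, hvd⟩ := Submodule.mem_sup.mp hA1
    -- b ∈ Ann (Ann (W ⊔ (l ⊓ m)))
    have hB1 : b ∈ omegaAnn ω (omegaAnn ω (W ⊔ (l ⊓ m))) := by
      intro y hy
      rw [omegaAnn_sup] at hy
      obtain ⟨hyW, hyF⟩ := hy
      have hylm : y ∈ l ⊔ m :=
        omegaAnn_inf_le_sup ω l m hskew hnondeg hl hm hfin₁ hfin₂ hindex hyF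
      obtain ⟨c, hc, n, hn, hcn⟩ := Submodule.mem_sup.mp hylm
      have hcW : c ∈ omegaAnn ω W := by
        intro w hw
        have hc' : ω c w = ω y w - ω n w := by
          rw [← hcn]; simp [map_add]
        rw [hc', hyW w hw, hmW hn w hw, sub_zero]
      have hcA : c ∈ omegaAnn ω V ⊓ omegaAnn ω W := ⟨hlV hc, hcW⟩
      have hbc : ω b c = 0 := by
        have hxc : ω x c = ω a c + ω b c := by rw [← hab]; simp [map_add]
        have h1 : ω x c = 0 := hx c hcA
        have h2 : ω a c = 0 := hll a ha c hc
        rw [h1, h2, zero_add] at hxc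
        exact hxc.symm
      have : ω b y = ω b c + ω b n := by rw [← hcn]; simp [map_add]
      rw [this, hbc, hmm' b hb n hn, add_zero]
    rw [closed_sup_findim ω hskew hW hfin₁] at hB1
    obtain ⟨w, hw, d₂, hd₂, hwd⟩ := Submodule.mem_sup.mp hB1
    -- d := d₁ + d₂ is in the gap
    have hvA : ∀ y ∈ omegaAnn ω V ⊓ omegaAnn ω W, ω v y = 0 := by
      intro y hy
      rw [hskew, hy.1 v hv, neg_zero]
    have hwA : ∀ y ∈ omegaAnn ω V ⊓ omegaAnn ω W, ω w y = 0 := by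
      intro y hy
      rw [hskew, hy.2 w hw, neg_zero]
    have hdA : ∀ y ∈ omegaAnn ω V ⊓ omegaAnn ω W, ω (d₁ + d₂) y = 0 := by
      intro y hy
      have hd' : ω (d₁ + d₂) y = ω x y - ω v y - ω w y := by
        rw [← hab, ← hvd, ← hwd]; simp [map_add]; ring
      rw [hd', hx y hy, hvA y hy, hwA y hy]
      ring
    have hdVW : d₁ + d₂ ∈ V ⊔ W :=
      gap_lemma ω l m hskew hnondeg hl hm hfin₁ hfin₂ hindex V W hVl hWm hV hW
        (d₁ + d₂) (add_mem hd₁ hd₂) hdA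
    have hxeq : x = (v + w) + (d₁ + d₂) := by
      rw [← hab, ← hvd, ← hwd]; abel
    rw [hxeq]
    exact add_mem (add_mem (Submodule.mem_sup_left hv) (Submodule.mem_sup_right hw)) hdVW
  · apply sup_le
    · intro v hv y hy
      rw [hskew, hy.1 v hv, neg_zero]
    · intro w hw y hy
      rw [hskew, hy.2 w hw, neg_zero]
end

section
/- Let (Z, ω) be a symplectic vector space over 𝕂 ∈ {ℝ, ℂ} with Lagrangian subspaces X, Y such that Z = X ⊕ Y. Let λ be a linear subspace of Z and let μ be a Lagrangian subspace of Z with μ = (μ ∩ X) + (μ ∩ Y). For a subspace S of Z set λ(S) := {y ∈ Y : ∃ x ∈ S ∩ X, x + y ∈ λ} and λ⁻¹(S) := {x ∈ X : ∃ y ∈ S ∩ Y, x + y ∈ λ}. Then: dom(λ ∩ μ) = μ ∩ X ∩ λ⁻¹((μ ∩ X)^ω); ran(λ ∩ μ) = μ ∩ Y ∩ λ((μ ∩ Y)^ω); rank(λ ∩ μ) = rank(μ ∩ X ∩ λ⁻¹((μ ∩ X)^ω)) + rank(λ ∩ μ ∩ Y); and rank(λ ∩ μ) = rank(μ ∩ Y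 ∩ λ((μ ∩ Y)^ω)) + rank(λ ∩ μ ∩ X), where rank denotes the (cardinal-valued) dimension. -/
/-- For a direct sum decomposition `Z = X ⊕ Y` and a subspace `M` of `Z`, viewed as a linear
relation from `X` to `Y`, the subspace `{x ∈ X : ∃ y ∈ Y, x + y ∈ M}`. -/
def relDom {𝕂 : Type*} [Field 𝕂] {Z : Type*} [AddCommGroup Z] [Module 𝕂 Z]
    (X Y M : Submodule 𝕂 Z) : Submodule 𝕂 Z where
  carrier := {x | x ∈ X ∧ ∃ y ∈ Y, x + y ∈ M}
  zero_mem' := ⟨X.zero_mem, 0, Y.zero_mem, by simp⟩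
  add_mem' := by
    rintro a b ⟨haX, ya, hya, hma⟩ ⟨hbX, yb, hyb, hmb⟩
    refine ⟨X.add_mem haX hbX, ya + yb, Y.add_mem hya hyb, ?_⟩
    rw [add_add_add_comm]
    exact M.add_mem hma hmb
  smul_mem' := by
    rintro c a ⟨haX, ya, hya, hma⟩
    refine ⟨X.smul_mem c haX, c • ya, Y.smul_mem c hya, ?_⟩
    rw [← smul_add]
    exact M.smul_mem c hma

section Aux

variable {𝕂 : Type*} [Field 𝕂] {Z : Type*} [AddCommGroup Z] [Module 𝕂 Z]

lemma mem_relDom_iff {X Y M : Submodule 𝕂 Z} {z : Z} :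
    z ∈ relDom X Y M ↔ z ∈ X ∧ ∃ y ∈ Y, z + y ∈ M := Iff.rfl

lemma mem_omegaAnn_iff {ω : Z →ₗ[𝕂] Z →ₗ[𝕂] 𝕂} {V : Submodule 𝕂 Z} {x : Z} :
    x ∈ omegaAnn ω V ↔ ∀ y ∈ V, ω x y = 0 := Iff.rfl

lemma relDom_inf_eq (ω : Z →ₗ[𝕂] Z →ₗ[𝕂] 𝕂) (X Y : Submodule 𝕂 Z)
    (hY : omegaAnn ω Y = Y) (hXY : X ⊓ Y = ⊥) (l m : Submodule 𝕂 Z)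
    (hm : omegaAnn ω m = m) (hmdiag : (m ⊓ X) ⊔ (m ⊓ Y) = m) :
    relDom X Y (l ⊓ m) = m ⊓ X ⊓ relDom X (omegaAnn ω (m ⊓ X) ⊓ Y) l := by
  ext x
  simp only [mem_relDom_iff, Submodule.mem_inf]
  constructor
  · rintro ⟨hxX, y, hyY, hl, hmem⟩
    rw [← hmdiag] at hmem
    obtain ⟨u, hu, v, hv, huv⟩ := Submodule.mem_sup.mp hmem
    have hbot : x - u ∈ X ⊓ Y := by
      constructor
      · exact X.sub_mem hxX hu.2
      · have : x - u = v - y := by linear_combination (norm := abel) -huv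
        rw [this]; exact Y.sub_mem hv.2 hyY
    rw [hXY, Submodule.mem_bot, sub_eq_zero] at hbot
    have hvy : v = y := by
      rw [hbot] at huv; exact add_left_cancel huv
    have hym : y ∈ m := hvy ▸ hv.1
    refine ⟨⟨hbot ▸ hu.1, hxX⟩, hxX, y, ⟨?_, hyY⟩, hl⟩
    intro w hw
    exact (hm ▸ hym) w (Submodule.mem_inf.mp hw).1
  · rintro ⟨⟨hxm, hxX⟩, -, y, ⟨hyann, hyY⟩, hl⟩
    refine ⟨hxX, y, hyY, hl, ?_⟩
    have hym : y ∈ m := by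
      rw [← hm, mem_omegaAnn_iff]
      intro w hw
      rw [← hmdiag] at hw
      obtain ⟨a, ha, b, hb, hab⟩ := Submodule.mem_sup.mp hw
      have h1 : ω y a = 0 := hyann a ha
      have h2 : ω y b = 0 := (hY ▸ hyY) b hb.2
      rw [← hab]; simp [h1, h2]
    exact m.add_mem hxm hym
  done

lemma rank_relDom (X Y : Submodule 𝕂 Z) (hcompl : IsCompl X Y) (M : Submodule 𝕂 Z) :
    Module.rank 𝕂 ↥M = Module.rank 𝕂 ↥(relDom X Y M) + Module.rank 𝕂 ↥(M ⊓ Y) := by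
  classical
  let π : Z →ₗ[𝕂] Z := X.subtype.comp (X.projectionOnto Y hcompl)
  let f : ↥M →ₗ[𝕂] Z := π.comp M.subtype
  have hrange : LinearMap.range f = relDom X Y M := by
    ext x
    constructor
    · rintro ⟨⟨z, hz⟩, rfl⟩
      refine ⟨(X.projectionOnto Y hcompl z).2, z - X.projectionOnto Y hcompl z, ?_, ?_⟩
      · have h := Submodule.projection_add_projection_eq_self hcompl z
        have heq : z - (X.projectionOnto Y hcompl z : Z)
            = (Y.projectionOnto X hcompl.symm z : Z) := by
          rw [sub_eq_iff_eq_add, add_comm]; exact h.symm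
        rw [heq]
        exact (Y.projectionOnto X hcompl.symm z).2
      · have hfz : f ⟨z, hz⟩ = (X.projectionOnto Y hcompl z : Z) := rfl
        rw [hfz, add_sub_cancel]
        exact hz
    · rintro ⟨hxX, y, hyY, hM⟩
      refine ⟨⟨x + y, hM⟩, ?_⟩
      have : X.projectionOnto Y hcompl (x + y) = ⟨x, hxX⟩ := by
        rw [map_add, Submodule.projectionOnto_apply_left hcompl ⟨x, hxX⟩,
          Submodule.projectionOnto_apply_of_mem_right hcompl hyY, add_zero]
      simp [f, π, this]
  have hker : LinearMap.ker f = Submodule.comap M.subtype (M ⊓ Y) := by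
    ext ⟨z, hz⟩
    simp only [LinearMap.mem_ker, Submodule.mem_comap, Submodule.mem_inf]
    have : f ⟨z, hz⟩ = (X.projectionOnto Y hcompl z : Z) := rfl
    rw [this]
    constructor
    · intro h
      refine ⟨hz, ?_⟩
      have h0 : X.projectionOnto Y hcompl z = 0 := by
        ext; simpa using h
      exact (Submodule.projectionOnto_apply_eq_zero_iff hcompl).mp h0
    · rintro ⟨-, hzY⟩
      rw [Submodule.projectionOnto_apply_of_mem_right hcompl (x := z) hzY]
      simp
  have := LinearMap.rank_range_add_rank_ker f
  rw [hrange, hker] at this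
  rw [← this]
  congr 1
  exact (Submodule.comapSubtypeEquivOfLe inf_le_left).rank_eq

end Aux

/-- Let `(Z, ω)` be a symplectic vector space over `𝕂 ∈ {ℝ, ℂ}` with Lagrangian subspaces
`X`, `Y` such that `Z = X ⊕ Y`. Let `l` be a subspace and `m` a Lagrangian subspace with
`m = (m ∩ X) + (m ∩ Y)`. With `l(S) := {y ∈ Y : ∃ x ∈ S ∩ X, x + y ∈ l}` and
`l⁻¹(S) := {x ∈ X : ∃ y ∈ S ∩ Y, x + y ∈ l}`, one has:
`dom (l ∩ m) = m ∩ X ∩ l⁻¹((m ∩ X)^ω)`; `ran (l ∩ m) = m ∩ Y ∩ l((m ∩ Y)^ω)`;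
`rank (l ∩ m) = rank (m ∩ X ∩ l⁻¹((m ∩ X)^ω)) + rank (l ∩ m ∩ Y)`; and
`rank (l ∩ m) = rank (m ∩ Y ∩ l((m ∩ Y)^ω)) + rank (l ∩ m ∩ X)`. -/
theorem dim_triangular_diagonal
    {𝕂 : Type*} [RCLike 𝕂] {Z : Type*} [AddCommGroup Z] [Module 𝕂 Z]
    (ω : Z →ₗ[𝕂] Z →ₗ[𝕂] 𝕂)
    (hskew : ∀ x y, ω x y = - ω y x)
    (hnondeg : ∀ x, (∀ y, ω x y = 0) → x = 0)
    (X Y : Submodule 𝕂 Z)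
    (hX : omegaAnn ω X = X) (hY : omegaAnn ω Y = Y)
    (hcompl : IsCompl X Y)
    (l m : Submodule 𝕂 Z)
    (hm : omegaAnn ω m = m)
    (hmdiag : (m ⊓ X) ⊔ (m ⊓ Y) = m) :
    relDom X Y (l ⊓ m) = m ⊓ X ⊓ relDom X (omegaAnn ω (m ⊓ X) ⊓ Y) l
      ∧ relDom Y X (l ⊓ m) = m ⊓ Y ⊓ relDom Y (omegaAnn ω (m ⊓ Y) ⊓ X) l
      ∧ Module.rank 𝕂 ↥(l ⊓ m)
          = Module.rank 𝕂 ↥(m ⊓ X ⊓ relDom X (omegaAnn ω (m ⊓ X) ⊓ Y) l)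
            + Module.rank 𝕂 ↥(l ⊓ m ⊓ Y)
      ∧ Module.rank 𝕂 ↥(l ⊓ m)
          = Module.rank 𝕂 ↥(m ⊓ Y ⊓ relDom Y (omegaAnn ω (m ⊓ Y) ⊓ X) l)
            + Module.rank 𝕂 ↥(l ⊓ m ⊓ X) := by
  have hXY : X ⊓ Y = ⊥ := disjoint_iff.mp hcompl.disjoint
  have hYX : Y ⊓ X = ⊥ := by rw [inf_comm]; exact hXY
  have hmdiag' : (m ⊓ Y) ⊔ (m ⊓ X) = m := by rw [sup_comm]; exact hmdiag
  have h1 := relDom_inf_eq ω X Y hY hXY l m hm hmdiag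
  have h2 := relDom_inf_eq ω Y X hX hYX l m hm hmdiag'
  refine ⟨h1, h2, ?_, ?_⟩
  · rw [← h1]; exact rank_relDom X Y hcompl (l ⊓ m)
  · rw [← h2]; exact rank_relDom Y X hcompl.symm (l ⊓ m)
end
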